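/- arXiv:2604.05975 — 2 statements merged into one kernel-verified Lean document; each statement's English description precedes it below -/
import Mathlib

section
/- Let n be an even positive integer, t_j = (j−1)·2π/n, and K the n×n Wittich matrix. For every integer k with 1 ≤ k ≤ n/2 − 1, the vector (cos(k t_j))_{j=1}^n is mapped by K to (sin(k t_j))_{j=1}^n, i.e., the Wittich matrix exactly reproduces the Hilbert transform on these discrete trigonometric vectors. -/
/-- Wittich's matrix: `K i j = 0` if `i − j` is even and
`K i j = (2/n) cot ((i−j) π / n)` if `i − j` is odd. -/
noncomputable def wittich (n : ℕ) : Matrix (Fin n) (Fin n) ℝ := fun i j =>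
  if Even ((i : ℤ) - (j : ℤ)) then 0
  else (2 / n) * Real.cot ((((i : ℤ) - (j : ℤ)) : ℝ) * Real.pi / n)

open Real Finset

private lemma cot_add_int_mul_pi' (x : ℝ) (m : ℤ) : Real.cot (x + m * π) = Real.cot x := by
  rw [Real.cot_eq_cos_div_sin, Real.cot_eq_cos_div_sin, Real.cos_add_int_mul_pi,
    Real.sin_add_int_mul_pi, mul_div_mul_left _ _ (zpow_ne_zero m (by norm_num) : ((-1:ℝ))^m ≠ 0)]

private lemma cot_neg' (x : ℝ) : Real.cot (-x) = -Real.cot x := by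
  rw [Real.cot_eq_cos_div_sin, Real.cot_eq_cos_div_sin, Real.cos_neg, Real.sin_neg, div_neg]

/-- The kernel function, as a function of the integer difference. -/
noncomputable def cfn (n : ℕ) (z : ℤ) : ℝ :=
  if Even z then 0 else (2 / n) * Real.cot (z * π / n)

private lemma wittich_eq_cfn (n : ℕ) (i j : Fin n) :
    wittich n i j = cfn n ((i : ℤ) - (j : ℤ)) := by
  unfold wittich cfn
  norm_num

private lemma cfn_add_int_mul (n : ℕ) (hn : 0 < n) (hne : Even n) (z t : ℤ) :
    cfn n (z + n * t) = cfn n z := by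
  have hpar : Even (z + (n : ℤ) * t) ↔ Even z := by
    rcases hne with ⟨r, hr⟩
    constructor <;> intro h
    · have := h.sub (⟨r * t, by push_cast [hr]; ring⟩ : Even ((n:ℤ) * t))
      simpa using this
    · exact h.add ⟨r * t, by push_cast [hr]; ring⟩
  unfold cfn
  rw [if_congr hpar rfl rfl]
  by_cases h : Even z
  · simp [h]
  · rw [if_neg h, if_neg h]
    have hn0 : (n : ℝ) ≠ 0 := Nat.cast_ne_zero.mpr hn.ne'
    have harg : ((z + (n:ℤ) * t : ℤ) : ℝ) * π / n = z * π / n + t * π := by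
      push_cast
      field_simp
    rw [harg, cot_add_int_mul_pi']

private lemma cfn_neg (n : ℕ) (z : ℤ) : cfn n (-z) = -cfn n z := by
  unfold cfn
  by_cases h : Even z
  · simp [h, even_neg]
  · rw [if_neg (fun hh => h (even_neg.mp hh)), if_neg h]
    push_cast
    rw [neg_mul, neg_div, cot_neg']
    ring

/-- Telescoping identity: `cot θ · sin (2kθ) = ∑_{j<k} (cos (2jθ) + cos (2(j+1)θ))`. -/
private lemma cot_mul_sin_telescope (θ : ℝ) (hθ : Real.sin θ ≠ 0) (k : ℕ) :
    Real.cot θ * Real.sin (2 * k * θ) =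
      ∑ j ∈ range k, (Real.cos (2 * j * θ) + Real.cos (2 * (j + 1) * θ)) := by
  induction k with
  | zero => simp
  | succ k ih =>
    rw [Finset.sum_range_succ, ← ih]
    have hdiff : Real.sin (2 * (k + 1 : ℕ) * θ) - Real.sin (2 * k * θ)
        = 2 * Real.sin θ * Real.cos ((2 * k + 1) * θ) := by
      rw [Real.sin_sub_sin]
      push_cast
      ring_nf
    have hcc : Real.cos (2 * (k : ℝ) * θ) + Real.cos (2 * ((k : ℝ) + 1) * θ)
        = 2 * Real.cos ((2 * k + 1) * θ) * Real.cos θ := by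
      rw [Real.cos_add_cos,
        show (2 * (k : ℝ) * θ + 2 * ((k : ℝ) + 1) * θ) / 2 = (2 * k + 1) * θ by ring,
        show (2 * (k : ℝ) * θ - 2 * ((k : ℝ) + 1) * θ) / 2 = -θ by ring, Real.cos_neg]
    have hcot : Real.cot θ * (2 * Real.sin θ * Real.cos ((2 * k + 1) * θ))
        = Real.cos (2 * (k : ℝ) * θ) + Real.cos (2 * ((k : ℝ) + 1) * θ) := by
      rw [Real.cot_eq_cos_div_sin, hcc]
      field_simp
    have hstep : Real.sin (2 * (k + 1 : ℕ) * θ) = Real.sin (2 * k * θ)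
        + 2 * Real.sin θ * Real.cos ((2 * k + 1) * θ) := by linarith [hdiff]
    rw [hstep, mul_add, hcot]

/-- Splitting a sum over `range (2m)` into even and odd indices. -/
private lemma sum_range_two_mul (m : ℕ) (f : ℕ → ℝ) :
    ∑ d ∈ range (2 * m), f d = ∑ e ∈ range m, (f (2 * e) + f (2 * e + 1)) := by
  induction m with
  | zero => simp
  | succ m ih =>
    have : 2 * (m + 1) = (2 * m) + 1 + 1 := by ring
    rw [this, Finset.sum_range_succ, Finset.sum_range_succ, Finset.sum_range_succ, ih]
    ring

/-- The character-sum over odd residues vanishes for `1 ≤ t < m`. -/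
private lemma char_sum_eq_zero (m t : ℕ) (hm : 0 < m) (ht1 : 1 ≤ t) (ht2 : t < m) :
    ∑ e ∈ range m, Real.cos ((t : ℝ) * (2 * e + 1) * (2 * π / (2 * m))) = 0 := by
  have hm0 : (m : ℝ) ≠ 0 := Nat.cast_ne_zero.mpr hm.ne'
  have key : ∀ e : ℕ, Real.cos ((t : ℝ) * (2 * e + 1) * (2 * π / (2 * m)))
      = (Complex.exp (((t : ℝ) * (2 * π / (2 * m)) : ℝ) * Complex.I)
          * (Complex.exp (((t : ℝ) * (2 * π / m) : ℝ) * Complex.I)) ^ e).re := by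
    intro e
    rw [← Complex.exp_nat_mul, ← Complex.exp_add]
    have : ((t : ℝ) * (2 * π / (2 * m)) : ℝ) * Complex.I
        + (e : ℕ) * ((((t : ℝ) * (2 * π / m)) : ℝ) * Complex.I)
        = (((t : ℝ) * (2 * e + 1) * (2 * π / (2 * m)) : ℝ)) * Complex.I := by
      push_cast
      field_simp
      ring
    rw [this, Complex.exp_ofReal_mul_I_re]
  simp only [key]
  rw [← Complex.re_sum]
  rw [← Finset.mul_sum]
  have hr : Complex.exp (((t : ℝ) * (2 * π / m) : ℝ) * Complex.I) ≠ 1 := by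
    intro h
    rw [Complex.exp_eq_one_iff] at h
    obtain ⟨z, hz⟩ := h
    have h3 : (t : ℝ) * (2 * π / m) = (z : ℝ) * (2 * π) := by
      have him := congrArg Complex.im hz
      simpa using him
    have hπ : (0:ℝ) < π := Real.pi_pos
    have h4 : (t : ℝ) = (z : ℝ) * m := by
      field_simp at h3
      nlinarith [h3]
    have h5 : (t : ℤ) = z * m := by exact_mod_cast h4
    rcases le_or_gt z 0 with hz0 | hz0
    · have : (z : ℤ) * m ≤ 0 := mul_nonpos_of_nonpos_of_nonneg hz0 (by positivity)
      omega
    · have : (1 : ℤ) ≤ z := hz0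
      have : (m : ℤ) ≤ z * m := le_mul_of_one_le_left (by positivity) this
      omega
  rw [geom_sum_eq hr]
  have hpow : (Complex.exp (((t : ℝ) * (2 * π / m) : ℝ) * Complex.I)) ^ m = 1 := by
    rw [← Complex.exp_nat_mul]
    have : (m : ℂ) * (((t : ℝ) * (2 * π / m) : ℝ) * Complex.I)
        = (t : ℤ) * (2 * π * Complex.I) := by
      push_cast
      have hm0' : (m : ℂ) ≠ 0 := Nat.cast_ne_zero.mpr hm.ne'
      field_simp
    rw [this, Complex.exp_int_mul_two_pi_mul_I]
  rw [hpow]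
  simp

/-- On the equidistant grid `t_j = j · 2π/n`, the Wittich matrix maps the sampled
vector `(cos (k t_j))_j` to `(sin (k t_j))_j` for every `1 ≤ k ≤ n/2 − 1`:
it exactly reproduces the Hilbert transform on discrete trigonometric vectors. -/
theorem wittich_exact_on_trig (n k : ℕ) (hn : 0 < n) (hne : Even n)
    (hk1 : 1 ≤ k) (hk2 : k ≤ n / 2 - 1) :
    (wittich n).mulVec (fun j : Fin n => Real.cos (k * (((j : ℕ) : ℝ) * (2 * Real.pi / n)))) =
      fun i : Fin n => Real.sin (k * (((i : ℕ) : ℝ) * (2 * Real.pi / n))) := by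
  haveI : NeZero n := ⟨hn.ne'⟩
  obtain ⟨m, hm⟩ := hne
  have hnm : n = 2 * m := by omega
  have hm2 : 2 ≤ m := by omega
  have hkm : k + 1 ≤ m := by omega
  have hn0 : (n : ℝ) ≠ 0 := Nat.cast_ne_zero.mpr hn.ne'
  -- the grid points
  set c : ℝ := 2 * π / n with hc
  funext i
  simp only [Matrix.mulVec, dotProduct]
  show ∑ j, wittich n i j * Real.cos (k * ((j : ℕ) * c)) = Real.sin (k * ((i : ℕ) * c))
  -- the two key sums
  set A : ℝ := ∑ d : Fin n, cfn n (d : ℕ) * Real.cos (k * ((d : ℕ) * c)) with hA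
  set B : ℝ := ∑ d : Fin n, cfn n (d : ℕ) * Real.sin (k * ((d : ℕ) * c)) with hB
  -- key per-pair fact: value of cfn at a Fin-subtraction
  have hsub : ∀ a b : Fin n, ∃ t : ℤ, (((a - b : Fin n) : ℕ) : ℤ) = (a : ℤ) - (b : ℤ) + n * t := by
    intro a b
    rcases le_or_gt b a with h | h
    · exact ⟨0, by rw [Fin.intCast_val_sub_eq_sub_add_ite]; simp [h]⟩
    · exact ⟨1, by rw [Fin.intCast_val_sub_eq_sub_add_ite]; simp [not_le.mpr h]⟩
  -- Step 1: reindex and split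
  have step1 : ∑ j, wittich n i j * Real.cos (k * ((j : ℕ) * c))
      = Real.cos (k * ((i : ℕ) * c)) * A + Real.sin (k * ((i : ℕ) * c)) * B := by
    have := Fintype.sum_equiv (Equiv.subLeft i)
      (fun d : Fin n => wittich n i (i - d) * Real.cos (k * (((i - d : Fin n) : ℕ) * c)))
      (fun j : Fin n => wittich n i j * Real.cos (k * ((j : ℕ) * c)))
      (fun d => rfl)
    rw [← this]
    have hterm : ∀ d : Fin n, wittich n i (i - d) * Real.cos (k * (((i - d : Fin n) : ℕ) * c))
        = cfn n (d : ℕ) * (Real.cos (k * ((i : ℕ) * c)) * Real.cos (k * ((d : ℕ) * c))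
            + Real.sin (k * ((i : ℕ) * c)) * Real.sin (k * ((d : ℕ) * c))) := by
      intro d
      obtain ⟨t, ht⟩ := hsub i d
      have h1 : wittich n i (i - d) = cfn n (d : ℕ) := by
        rw [wittich_eq_cfn]
        have : (i : ℤ) - (((i - d : Fin n) : ℕ) : ℤ) = ((d : ℕ) : ℤ) + n * (-t) := by
          rw [ht]; ring
        rw [this, cfn_add_int_mul n hn ⟨m, hm⟩]
      have h2 : Real.cos (k * (((i - d : Fin n) : ℕ) * c))
          = Real.cos (k * ((i : ℕ) * c)) * Real.cos (k * ((d : ℕ) * c))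
            + Real.sin (k * ((i : ℕ) * c)) * Real.sin (k * ((d : ℕ) * c)) := by
        have hval : ((((i - d : Fin n) : ℕ) : ℝ)) = (i : ℕ) - ((d : ℕ) : ℝ) + n * t := by
          exact_mod_cast congrArg (fun z : ℤ => (z : ℝ)) ht
        have harg : (k : ℝ) * (((i - d : Fin n) : ℕ) * c)
            = ((k * ((i : ℕ) * c)) - (k * ((d : ℕ) * c))) + (k * t) * (2 * π) := by
          rw [hval, hc]
          field_simp
        rw [harg]
        have : ((k : ℝ) * t) = ((k * t : ℤ) : ℝ) := by push_cast; ring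
        rw [this, Real.cos_add_int_mul_two_pi, Real.cos_sub]
      rw [h1, h2]
    rw [Finset.sum_congr rfl (fun d _ => hterm d)]
    rw [hA, hB]
    simp only [mul_add, Finset.sum_add_distrib, Finset.mul_sum]
    congr 1 <;> · apply Finset.sum_congr rfl; intro d _; ring
  -- Step 2: A = 0 by oddness
  have hAzero : A = 0 := by
    have hterm : ∀ d : Fin n, cfn n ((-d : Fin n) : ℕ) * Real.cos (k * (((-d : Fin n) : ℕ) * c))
        = -(cfn n (d : ℕ) * Real.cos (k * ((d : ℕ) * c))) := by
        intro d
        obtain ⟨t, ht⟩ := hsub 0 d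
        have ht' : (((-d : Fin n) : ℕ) : ℤ) = -((d : ℕ) : ℤ) + n * t := by
          rw [← zero_sub, ht]
          simp
        have h1 : cfn n ((-d : Fin n) : ℕ) = -cfn n (d : ℕ) := by
          have : ((((-d : Fin n) : ℕ) : ℤ)) = (-((d : ℕ) : ℤ)) + n * t := ht'
          rw [this, cfn_add_int_mul n hn ⟨m, hm⟩, cfn_neg]
        have h2 : Real.cos (k * (((-d : Fin n) : ℕ) * c)) = Real.cos (k * ((d : ℕ) * c)) := by
          have hval : ((((-d : Fin n) : ℕ) : ℝ)) = -((d : ℕ) : ℝ) + n * t := by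
            exact_mod_cast congrArg (fun z : ℤ => (z : ℝ)) ht'
          have harg : (k : ℝ) * (((-d : Fin n) : ℕ) * c)
              = (-(k * ((d : ℕ) * c))) + (k * t) * (2 * π) := by
            rw [hval, hc]; field_simp
          rw [harg]
          have : ((k : ℝ) * t) = ((k * t : ℤ) : ℝ) := by push_cast; ring
          rw [this, Real.cos_add_int_mul_two_pi, Real.cos_neg]
        rw [h1, h2]; ring
    have hAneg : A = -A := by
      calc A = ∑ d : Fin n, cfn n ((-d : Fin n) : ℕ) * Real.cos (k * (((-d : Fin n) : ℕ) * c)) := by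
            rw [hA]
            exact (Fintype.sum_equiv (Equiv.neg (Fin n))
              (fun d : Fin n => cfn n ((-d : Fin n) : ℕ) * Real.cos (k * (((-d : Fin n) : ℕ) * c)))
              (fun d : Fin n => cfn n (d : ℕ) * Real.cos (k * ((d : ℕ) * c)))
              (fun d => rfl)).symm
        _ = ∑ d : Fin n, -(cfn n (d : ℕ) * Real.cos (k * ((d : ℕ) * c))) :=
            Finset.sum_congr rfl (fun d _ => hterm d)
        _ = -A := by rw [hA, Finset.sum_neg_distrib]
    linarith
  -- Step 3: B = 1
  have hBone : B = 1 := by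
    have hBrange : B = ∑ d ∈ range n, cfn n d * Real.sin (k * (d * c)) := by
      rw [hB]
      exact Fin.sum_univ_eq_sum_range (fun d : ℕ => cfn n d * Real.sin (k * (d * c))) n
    rw [hBrange, show range n = range (2 * m) by rw [hnm], sum_range_two_mul]
    have heven : ∀ e : ℕ, cfn n (2 * e) = 0 := by
      intro e
      unfold cfn
      rw [if_pos (by exact ⟨e, by ring⟩)]
    have hodd : ∀ e : ℕ, e < m →
        cfn n (2 * e + 1) * Real.sin (k * ((2 * e + 1 : ℕ) * c))
        = (2 / n) * ∑ j ∈ range k,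
            (Real.cos ((j : ℝ) * (2 * e + 1) * c) + Real.cos (((j : ℝ) + 1) * (2 * e + 1) * c)) := by
      intro e he
      set θ : ℝ := (2 * e + 1) * π / n with hθdef
      have hθpos : 0 < θ := by
        rw [hθdef]; positivity
      have hθlt : θ < π := by
        rw [hθdef, hnm]
        rw [div_lt_iff₀ (by positivity)]
        have h1 : (2 * (e : ℝ) + 1) < 2 * (m : ℝ) := by
          exact_mod_cast (by omega : 2 * e + 1 < 2 * m)
        have h2 := mul_lt_mul_of_pos_right h1 Real.pi_pos
        push_cast
        linarith
      have hsθ : Real.sin θ ≠ 0 := (Real.sin_pos_of_pos_of_lt_pi hθpos hθlt).ne'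
      have hcfn : cfn n (2 * e + 1) = (2 / n) * Real.cot θ := by
        unfold cfn
        rw [if_neg (by simp [Int.even_add_one, parity_simps])]
        congr 1
        rw [hθdef]
        push_cast
        ring
      have hsin : Real.sin ((k : ℝ) * ((2 * e + 1 : ℕ) * c)) = Real.sin (2 * k * θ) := by
        congr 1
        rw [hθdef, hc]
        push_cast
        field_simp
      rw [hcfn, hsin, mul_assoc, cot_mul_sin_telescope θ hsθ k]
      congr 1
      apply Finset.sum_congr rfl
      intro j _
      have a1 : 2 * (j : ℝ) * θ = (j : ℝ) * (2 * e + 1) * c := by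
        rw [hθdef, hc]; field_simp
      have a2 : 2 * ((j : ℝ) + 1) * θ = ((j : ℝ) + 1) * (2 * e + 1) * c := by
        rw [hθdef, hc]; field_simp
      rw [a1, a2]
    have hsplit : ∑ e ∈ range m, (cfn n (2 * e) * Real.sin (k * ((2 * e : ℕ) * c))
          + cfn n (2 * e + 1) * Real.sin (k * ((2 * e + 1 : ℕ) * c)))
        = ∑ e ∈ range m, (2 / (n : ℝ)) * ∑ j ∈ range k,
            (Real.cos ((j : ℝ) * (2 * e + 1) * c) + Real.cos (((j : ℝ) + 1) * (2 * e + 1) * c)) := by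
      apply Finset.sum_congr rfl
      intro e he
      rw [heven e, hodd e (Finset.mem_range.mp he)]
      ring
    calc ∑ e ∈ range m, (cfn n (2 * e) * Real.sin (↑k * (↑(2 * e) * c))
          + cfn n (2 * e + 1) * Real.sin (↑k * (↑(2 * e + 1) * c)))
        = ∑ e ∈ range m, (2 / (n : ℝ)) * ∑ j ∈ range k,
            (Real.cos ((j : ℝ) * (2 * e + 1) * c) + Real.cos (((j : ℝ) + 1) * (2 * e + 1) * c)) := hsplit
      _ = (2 / (n : ℝ)) * ∑ j ∈ range k, ∑ e ∈ range m,
            (Real.cos ((j : ℝ) * (2 * e + 1) * c) + Real.cos (((j : ℝ) + 1) * (2 * e + 1) * c)) := by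
          rw [← Finset.mul_sum, Finset.sum_comm]
      _ = 1 := by
          have hS : ∀ t : ℕ, 1 ≤ t → t < m →
              ∑ e ∈ range m, Real.cos ((t : ℝ) * (2 * e + 1) * c) = 0 := by
            intro t ht1 ht2
            have h0 := char_sum_eq_zero m t (by omega) ht1 ht2
            rw [← h0]
            apply Finset.sum_congr rfl
            intro e _
            congr 1
            rw [hc, hnm]
            push_cast
            ring

          have hinner : ∀ j ∈ range k, ∑ e ∈ range m,
              (Real.cos ((j : ℝ) * (2 * e + 1) * c) + Real.cos (((j : ℝ) + 1) * (2 * e + 1) * c))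
              = if j = 0 then (m : ℝ) else 0 := by
            intro j hj
            have hjk : j < k := Finset.mem_range.mp hj
            rw [Finset.sum_add_distrib]
            by_cases hj0 : j = 0
            · subst hj0
              have e1 : ∑ e ∈ range m, Real.cos ((((0:ℕ) : ℝ)) * (2 * e + 1) * c) = m := by
                simp
              have e2 : ∑ e ∈ range m, Real.cos (((((0:ℕ) : ℝ)) + 1) * (2 * e + 1) * c) = 0 := by
                have h1 := hS 1 le_rfl (by omega)
                rw [← h1]
                apply Finset.sum_congr rfl
                intro e _
                norm_num
              rw [e1, e2]
              simp
            · have h1 : ∑ e ∈ range m, Real.cos ((j : ℝ) * (2 * e + 1) * c) = 0 :=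
                hS j (by omega) (by omega)
              have h2 : ∑ e ∈ range m, Real.cos (((j : ℝ) + 1) * (2 * e + 1) * c) = 0 := by
                have := hS (j + 1) (by omega) (by omega)
                convert this using 2 with e
                push_cast
                ring
              rw [h1, h2]
              simp [hj0]
          rw [Finset.sum_congr rfl hinner, Finset.sum_ite_eq' (range k) 0 (fun _ => (m : ℝ))]
          rw [if_pos (Finset.mem_range.mpr (by omega))]
          rw [hnm]
          have hm0' : (m : ℝ) ≠ 0 := Nat.cast_ne_zero.mpr (by omega)
          push_cast
          field_simp
  rw [step1, hAzero, hBone]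
  ring
end

section
/- With the setup of the generalized Neumann kernel (A(t) = η(t) − α, bounded case), M(s,t) + (1/2π)cot((s−t)/2) extends continuously to the diagonal with limiting value M̃(t,t) = (1/π)·Re( (1/2)·η''(t)/η'(t) − A'(t)/A(t) ). -/
open Filter

open Topology


lemma key_sq {E : Type*} [NormedAddCommGroup E] [NormedSpace ℝ E] (g g' : ℝ → E) (t : ℝ)
    (hg : ∀ s, HasDerivAt g (g' s) s) (h0 : g t = 0) (h0' : g' t = 0)
    (h : Tendsto (fun s => (s - t)⁻¹ • g' s) (𝓝[≠] t) (𝓝 0)) :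
    Tendsto (fun s => ((s - t) ^ 2)⁻¹ • g s) (𝓝[≠] t) (𝓝 0) := by
  rw [NormedAddCommGroup.tendsto_nhds_zero]
  intro ε hε
  have hε2 : (0:ℝ) < ε / 2 := by positivity
  have hb : ∀ᶠ s in 𝓝[≠] t, ‖g' s‖ ≤ ε / 2 * |s - t| := by
    filter_upwards [(NormedAddCommGroup.tendsto_nhds_zero.mp h) (ε/2) hε2,
      self_mem_nhdsWithin] with s hs hst
    have hst' : s - t ≠ 0 := sub_ne_zero.2 hst
    rw [norm_smul, norm_inv, Real.norm_eq_abs] at hs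
    have habs : (0:ℝ) < |s - t| := abs_pos.2 hst'
    have := hs.le
    calc ‖g' s‖ = |s - t| * (|s - t|⁻¹ * ‖g' s‖) := by field_simp
      _ ≤ |s - t| * (ε/2) := mul_le_mul_of_nonneg_left this habs.le
      _ = ε / 2 * |s - t| := mul_comm _ _
  rw [eventually_nhdsWithin_iff, Metric.eventually_nhds_iff] at hb
  obtain ⟨δ, hδ, hδ'⟩ := hb
  rw [eventually_nhdsWithin_iff, Metric.eventually_nhds_iff]
  refine ⟨δ, hδ, fun s hs hst => ?_⟩
  have hst' : s - t ≠ 0 := sub_ne_zero.2 hst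
  have hbound : ∀ u ∈ Metric.closedBall t |s - t|, ‖g' u‖ ≤ ε / 2 * |s - t| := by
    intro u hu
    rw [Metric.mem_closedBall, Real.dist_eq] at hu
    rcases eq_or_ne u t with rfl | hu'
    · simp [h0']
      positivity
    · have h1 : dist u t < δ := by
        rw [Real.dist_eq]
        exact lt_of_le_of_lt hu (by rwa [Real.dist_eq] at hs)
      calc ‖g' u‖ ≤ ε / 2 * |u - t| := hδ' h1 hu'
        _ ≤ ε / 2 * |s - t| := by gcongr
  have hmv : ‖g s - g t‖ ≤ ε / 2 * |s - t| * ‖s - t‖ := by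
    refine (convex_closedBall t |s - t|).norm_image_sub_le_of_norm_hasDerivWithin_le
     (fun u hu => (hg u).hasDerivWithinAt) hbound ?_ ?_
    · simp [Metric.mem_closedBall, Real.dist_eq, abs_nonneg]
    · simp [Metric.mem_closedBall, Real.dist_eq]
  rw [h0, sub_zero, Real.norm_eq_abs] at hmv
  rw [norm_smul, norm_inv, Real.norm_eq_abs]
  have h2 : |(s - t) ^ 2| = |s - t| * |s - t| := by rw [sq, abs_mul]
  have habs : (0:ℝ) < |s - t| := abs_pos.2 hst'
  calc |(s-t)^2|⁻¹ * ‖g s‖ ≤ |(s-t)^2|⁻¹ * (ε/2 * |s-t| * |s-t|) := by gcongr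
    _ = ε / 2 := by
        have h3 : |s - t| * |s - t| ≠ 0 := by positivity
        rw [h2, show ε / 2 * |s - t| * |s - t| = |s - t| * |s - t| * (ε / 2) by ring, inv_mul_cancel_left₀ h3]
    _ < ε := by linarith

lemma cot_lim : Tendsto (fun u : ℝ => 1/2 * Real.cot (u/2) - u⁻¹) (𝓝[≠] (0:ℝ)) (𝓝 0) := by
  have hg : ∀ u : ℝ, HasDerivAt (fun u : ℝ => u * Real.cos (u/2) - 2 * Real.sin (u/2))
      (-(u/2) * Real.sin (u/2)) u := by
    intro u
    have h1 : HasDerivAt (fun u : ℝ => u/2) (1/2) u := (hasDerivAt_id u).div_const 2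
    have hcos : HasDerivAt (fun u : ℝ => Real.cos (u/2)) (-Real.sin (u/2) * (1/2)) u := h1.cos
    have hsin : HasDerivAt (fun u : ℝ => Real.sin (u/2)) (Real.cos (u/2) * (1/2)) u := h1.sin
    have := ((hasDerivAt_id u).mul hcos).sub (hsin.const_mul 2)
    refine this.congr_deriv ?_
    simp; ring
  have hkey : Tendsto (fun u : ℝ => ((u - 0) ^ 2)⁻¹ •
      (u * Real.cos (u/2) - 2 * Real.sin (u/2))) (𝓝[≠] (0:ℝ)) (𝓝 0) := by
    refine key_sq _ (fun u => -(u/2) * Real.sin (u/2)) 0 hg (by simp) (by simp) ?_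
    have hc : Tendsto (fun u : ℝ => -(Real.sin (u/2)) / 2) (𝓝[≠] (0:ℝ)) (𝓝 0) := by
      have : Continuous fun u : ℝ => -(Real.sin (u/2)) / 2 :=
        ((Real.continuous_sin.comp (continuous_id.div_const 2)).neg).div_const 2
      simpa using (this.tendsto 0).mono_left nhdsWithin_le_nhds
    refine hc.congr' ?_
    filter_upwards [self_mem_nhdsWithin] with u hu
    have hu' : u ≠ 0 := hu
    simp only [sub_zero, smul_eq_mul]
    field_simp
  have hhalf : Tendsto (fun u : ℝ => u/2) (𝓝[≠] (0:ℝ)) (𝓝[≠] (0:ℝ)) := by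
    rw [tendsto_nhdsWithin_iff]
    constructor
    · simpa using ((continuous_id.div_const 2).tendsto 0).mono_left
        (nhdsWithin_le_nhds : 𝓝[≠] (0:ℝ) ≤ 𝓝 0)
    · filter_upwards [self_mem_nhdsWithin] with u hu
      have hu' : u ≠ 0 := hu
      simp [div_ne_zero hu']
  have hden : Tendsto (fun u : ℝ => Real.sin (u/2) / (u/2)) (𝓝[≠] (0:ℝ)) (𝓝 1) := by
    have hs0 : Tendsto (slope Real.sin 0) (𝓝[≠] (0:ℝ)) (𝓝 1) := by
      simpa using hasDerivAt_iff_tendsto_slope.mp (Real.hasDerivAt_sin 0)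
    refine (hs0.comp hhalf).congr (fun u => ?_)
    simp [slope_def_field]
  have hsne : ∀ᶠ u in 𝓝[≠] (0:ℝ), Real.sin (u/2) ≠ 0 := by
    filter_upwards [hden.eventually_ne one_ne_zero, self_mem_nhdsWithin] with u h1 h2
    intro hs
    exact h1 (by simp [hs])
  have := hkey.div hden one_ne_zero
  rw [zero_div] at this
  refine this.congr' ?_
  filter_upwards [hsne, self_mem_nhdsWithin] with u hs hu
  have hu' : u ≠ 0 := hu
  rw [Real.cot_eq_cos_div_sin]
  simp only [sub_zero, smul_eq_mul, Pi.div_apply]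
  field_simp

lemma alg_P (e1 e2 u k : ℂ) (hu : u ≠ 0) (hk : k ≠ 0) :
    (k - u*e1 - 1/2*(u*u)*e2)/u^2 * (u/k) + 1/2*e2*(u/k) = e1/(-k) + u⁻¹ := by
  have h1 : (k - u*e1 - 1/2*(u*u)*e2)/u^2 * (u/k) = (k - u*e1 - 1/2*(u*u)*e2)/(u*k) := by
    rw [div_mul_div_comm, sq]
    rw [show u * u * k = (u * k) * u by ring]
    rw [mul_div_mul_right _ _ hu]
  rw [h1, div_neg]
  field_simp
  ring

/-- With `A(t) = η(t) − α` (bounded case) and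
`M(s,t) = Re[(1/π) (A(s)/A(t)) η'(t)/(η(t) − η(s))]` for `s ≠ t`, the function
`M(s,t) + (1/2π) cot((s−t)/2)` extends continuously to the diagonal with limiting
value `M̃(t,t) = (1/π) Re((1/2) η''(t)/η'(t) − A'(t)/A(t))`. -/
theorem generalized_kernel_M_diagonal
    (η η' η'' : ℝ → ℂ)
    (hper : ∀ t, η (t + 2 * Real.pi) = η t)
    (hd : ∀ t, HasDerivAt η (η' t) t)
    (hd2 : ∀ t, HasDerivAt η' (η'' t) t)
    (hcont : Continuous η'')
    (hne : ∀ t, η' t ≠ 0)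
    (hinj : Set.InjOn η (Set.Ico 0 (2 * Real.pi)))
    (α : ℂ) (hα : ∀ t, η t ≠ α) (t : ℝ) :
    Tendsto
      (fun s : ℝ =>
        ((1 / (Real.pi : ℂ)) * ((η s - α) / (η t - α)) * (η' t / (η t - η s))).re +
          (1 / (2 * Real.pi)) * Real.cot ((s - t) / 2))
      (nhdsWithin t {t}ᶜ)
      (nhds ((1 / Real.pi) *
        ((1 / 2 : ℂ) * (η'' t / η' t) - η' t / (η t - α)).re)) := by
  have hπ : (Real.pi : ℝ) ≠ 0 := Real.pi_ne_zero
  have hαt : η t - α ≠ 0 := sub_ne_zero.2 (hα t)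
  have hslope : Tendsto (slope η t) (𝓝[≠] t) (𝓝 (η' t)) :=
    hasDerivAt_iff_tendsto_slope.mp (hd t)
  have hslope2 : Tendsto (slope η' t) (𝓝[≠] t) (𝓝 (η'' t)) :=
    hasDerivAt_iff_tendsto_slope.mp (hd2 t)
  have hkne : ∀ᶠ s in 𝓝[≠] t, η s - η t ≠ 0 := by
    filter_upwards [hslope.eventually_ne (hne t)] with s hs hk
    exact hs (by simp [slope_def_module, hk])
  have hevst : ∀ᶠ s in 𝓝[≠] t, s ≠ t := by
    filter_upwards [self_mem_nhdsWithin] with s hs; exact hs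
  set G : ℝ → ℂ := fun s => η s - η t - ((s : ℂ) - t) * η' t
      - (1/2) * (((s : ℂ) - t) * ((s : ℂ) - t)) * η'' t with hGdef
  set G' : ℝ → ℂ := fun s => η' s - η' t - ((s : ℂ) - t) * η'' t with hG'def
  have hG : ∀ s, HasDerivAt G (G' s) s := by
    intro s
    have hid : HasDerivAt (fun s : ℝ => (s : ℂ)) 1 s := by
      exact Complex.ofRealCLM.hasDerivAt (x := s)
    have hu : HasDerivAt (fun s : ℝ => ((s : ℂ) - t)) 1 s := hid.sub_const _
    have h1 := ((hd s).sub_const (η t)).sub (hu.mul_const (η' t))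
    have h2 := (((hu.mul hu).const_mul (1/2 : ℂ)).mul_const (η'' t))
    have h3 := h1.sub h2
    refine h3.congr_deriv ?_
    simp only [hG'def, mul_one, one_mul]
    ring
  have hGkey : Tendsto (fun s => ((s - t) ^ 2)⁻¹ • G s) (𝓝[≠] t) (𝓝 0) := by
    refine key_sq G G' t hG (by simp [hGdef]) (by simp [hG'def]) ?_
    have h4 : Tendsto (fun s => slope η' t s - η'' t) (𝓝[≠] t) (𝓝 0) := by
      simpa using hslope2.sub_const (η'' t)
    refine h4.congr' ?_
    filter_upwards [hevst] with s hs
    have hst : s - t ≠ 0 := sub_ne_zero.2 hs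
    simp only [slope_def_module, hG'def, smul_sub, Complex.real_smul]
    push_cast
    have h5 : ((s : ℂ) - t) ≠ 0 := sub_ne_zero.2 (fun h => hs (by exact_mod_cast h))
    field_simp
  have hGkey' : Tendsto (fun s => G s / ((s : ℂ) - t) ^ 2) (𝓝[≠] t) (𝓝 0) := by
    refine hGkey.congr (fun s => ?_)
    rw [Complex.real_smul]
    push_cast
    ring
  have hQ : Tendsto (fun s : ℝ => ((s : ℂ) - t) / (η s - η t)) (𝓝[≠] t) (𝓝 (η' t)⁻¹) := by
    refine (hslope.inv₀ (hne t)).congr' ?_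
    filter_upwards [hevst] with s hs
    rw [slope_def_module, Complex.real_smul]
    push_cast
    rw [mul_inv_rev, inv_inv]
    ring
  have hP : Tendsto (fun s => η' t / (η t - η s) + ((s : ℂ) - t)⁻¹) (𝓝[≠] t)
      (𝓝 ((1/2 : ℂ) * (η'' t / η' t))) := by
    have hmain := (hGkey'.mul hQ).add
      ((tendsto_const_nhds (x := (1/2 : ℂ) * η'' t)).mul hQ)
    rw [zero_mul, zero_add] at hmain
    have hval : (1/2 : ℂ) * η'' t * (η' t)⁻¹ = (1/2 : ℂ) * (η'' t / η' t) := by ring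
    rw [hval] at hmain
    refine hmain.congr' ?_
    filter_upwards [hevst, hkne] with s hs hk
    have h5 : ((s : ℂ) - t) ≠ 0 := sub_ne_zero.2 (fun h => hs (by exact_mod_cast h))
    have hk' : η t - η s ≠ 0 := fun h => hk (by rw [← neg_sub] at h; simpa using neg_eq_zero.mp h)
    simp only [hGdef]
    rw [show η t - η s = -(η s - η t) by ring]
    exact alg_P (η' t) (η'' t) _ _ h5 hk
  have hA : Tendsto (fun s => (η s - α) / (η t - α)) (𝓝[≠] t) (𝓝 1) := by
    have hc : Tendsto (fun s => (η s - α) / (η t - α)) (𝓝 t) (𝓝 ((η t - α) / (η t - α))) :=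
      (((hd t).continuousAt).sub continuousAt_const).div_const _
    rw [div_self hαt] at hc
    exact hc.mono_left nhdsWithin_le_nhds
  have hB : Tendsto (fun s => (1 - (η s - α) / (η t - α)) * ((s : ℂ) - t)⁻¹) (𝓝[≠] t)
      (𝓝 (-(η' t / (η t - α)))) := by
    have h1 : Tendsto (fun s => -(slope η t s) / (η t - α)) (𝓝[≠] t)
        (𝓝 (-(η' t) / (η t - α))) := hslope.neg.div_const _
    rw [neg_div] at h1
    refine h1.congr' ?_
    filter_upwards [hevst] with s hs
    have h5 : ((s : ℂ) - t) ≠ 0 := sub_ne_zero.2 (fun h => hs (by exact_mod_cast h))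
    rw [slope_def_module, Complex.real_smul]
    push_cast
    rw [one_sub_div hαt, div_mul_eq_mul_div, div_eq_div_iff hαt hαt]
    ring
  have hC : Tendsto (fun s => (η s - α) / (η t - α) * (η' t / (η t - η s)) + ((s : ℂ) - t)⁻¹)
      (𝓝[≠] t) (𝓝 ((1/2 : ℂ) * (η'' t / η' t) - η' t / (η t - α))) := by
    have := (hA.mul hP).add hB
    rw [one_mul] at this
    have hval : (1/2 : ℂ) * (η'' t / η' t) + -(η' t / (η t - α))
        = (1/2 : ℂ) * (η'' t / η' t) - η' t / (η t - α) := by ring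
    rw [hval] at this
    refine this.congr (fun s => ?_)
    ring
  have hsub : Tendsto (fun s : ℝ => s - t) (𝓝[≠] t) (𝓝[≠] (0:ℝ)) := by
    rw [tendsto_nhdsWithin_iff]
    constructor
    · simpa [Pi.sub_def] using ((continuous_id.sub (continuous_const : Continuous fun _ : ℝ => t)).tendsto
        t).mono_left (nhdsWithin_le_nhds : 𝓝[≠] t ≤ 𝓝 t)
    · filter_upwards [hevst] with s hs
      simp [sub_ne_zero.2 hs]
  have hR : Tendsto (fun s : ℝ => 1/2 * Real.cot ((s - t)/2) - (s - t)⁻¹) (𝓝[≠] t) (𝓝 0) :=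
    cot_lim.comp hsub
  have hfin := (((Complex.continuous_re.tendsto _).comp hC).const_mul (1/Real.pi)).add
    (hR.const_mul (1/Real.pi))
  rw [mul_zero, add_zero] at hfin
  refine hfin.congr (fun s => ?_)
  simp only [Function.comp]
  rw [show ((s : ℂ) - t) = ((s - t : ℝ) : ℂ) by push_cast; ring, ← Complex.ofReal_inv,
    Complex.add_re, Complex.ofReal_re, mul_assoc (1 / (Real.pi : ℂ)),
    show (1 / (Real.pi : ℂ)) = ((1 / Real.pi : ℝ) : ℂ) by push_cast; ring,
    Complex.re_ofReal_mul]
  field_simp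
  ring
end
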